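/- Let 0 < ε < 1 and n/(n+ε) < θ ≤ 1. There is a constant C such that for all k, k' ∈ Z, all x ∈ R^n, and all sequences (λ_ℓ)_{ℓ ∈ Z^n} of nonnegative reals: Σ_{ℓ ∈ Z^n} 2^{-kn} λ_ℓ · r^ε / (r + |x − 2^{-k}ℓ|)^{n+ε} ≤ C · 2^{(−k − log₂ r) n (1 − 1/θ)} · [M(Σ_ℓ λ_ℓ^θ χ_{Q_{k,ℓ}})(x)]^{1/θ}, where r = max(2^{-k}, 2^{-k'}), Q_{k,ℓ} is the dyadic cube with side length 2^{-k} and lower-left corner 2^{-k}ℓ, and M is the Hardy–Littlewood maximal operator. -/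

import Mathlib

open MeasureTheory ENNReal

/-- The uncentered Hardy–Littlewood maximal function (with values in `ℝ≥0∞`). -/
noncomputable def maxFn {n : ℕ} (g : EuclideanSpace ℝ (Fin n) → ℝ)
    (x : EuclideanSpace ℝ (Fin n)) : ℝ≥0∞ :=
  ⨆ (y : EuclideanSpace ℝ (Fin n)) (r : ℝ) (_ : 0 < r) (_ : x ∈ Metric.ball y r),
    (volume (Metric.ball y r))⁻¹ * ∫⁻ z in Metric.ball y r, ENNReal.ofReal |g z|

/-- The dyadic cube with side length `2^(-k)` and lower-left corner `2^(-k) ℓ`. -/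
def dyadicCube {n : ℕ} (k : ℤ) (ℓ : Fin n → ℤ) : Set (EuclideanSpace ℝ (Fin n)) :=
  {z | ∀ i, (2 : ℝ) ^ (-k) * (ℓ i : ℝ) ≤ z i ∧ z i < (2 : ℝ) ^ (-k) * ((ℓ i : ℝ) + 1)}

section Aux

lemma aux_tsum_rpow_le {ι : Type*} (a : ι → ℝ≥0∞) {p : ℝ} (hp : 1 ≤ p) :
    ∑' i, a i ^ p ≤ (∑' i, a i) ^ p := by
  have hp0 : (0:ℝ) < p := by linarith
  set S := ∑' i, a i with hSdef
  rcases eq_or_ne S ⊤ with hS | hS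
  · rw [hS, ENNReal.top_rpow_of_pos hp0]; exact le_top
  rcases eq_or_ne S 0 with h0 | h0
  · have hall : ∀ i, a i = 0 := fun i => (ENNReal.tsum_eq_zero.mp h0) i
    have : ∀ i, a i ^ p = 0 := fun i => by rw [hall i, ENNReal.zero_rpow_of_pos hp0]
    simp [this]
  have key : ∀ i, a i ^ p ≤ S ^ (p - 1) * a i := by
    intro i
    rcases eq_or_ne (a i) 0 with h | h
    · rw [h, ENNReal.zero_rpow_of_pos hp0]; exact zero_le
    · have hle : a i ≤ S := ENNReal.le_tsum i
      have htop : a i ≠ ⊤ := fun hh => hS (top_le_iff.mp (hh ▸ hle))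
      calc a i ^ p = a i ^ (p - 1) * a i ^ (1:ℝ) := by
            rw [← ENNReal.rpow_add _ _ h htop]; norm_num
        _ ≤ S ^ (p - 1) * a i ^ (1:ℝ) :=
            mul_le_mul_left (ENNReal.rpow_le_rpow hle (by linarith)) _
        _ = S ^ (p - 1) * a i := by rw [ENNReal.rpow_one]
  calc ∑' i, a i ^ p ≤ ∑' i, S ^ (p - 1) * a i := ENNReal.tsum_le_tsum key
    _ = S ^ (p - 1) * S := by rw [ENNReal.tsum_mul_left]
    _ = S ^ p := by
        nth_rewrite 2 [← ENNReal.rpow_one S]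
        rw [← ENNReal.rpow_add _ _ h0 hS]
        norm_num

lemma aux_two_zpow_pos {k : ℤ} : (0:ℝ) < (2:ℝ) ^ (-k) := zpow_pos (by norm_num) _

lemma aux_oneD {h t : ℝ} (hk : 0 < h) (a : ℤ) :
    (h * a ≤ t ∧ t < h * (a + 1)) ↔ a = ⌊t / h⌋ := by
  rw [eq_comm, Int.floor_eq_iff, le_div_iff₀ hk, div_lt_iff₀ hk]
  push_cast
  constructor
  · rintro ⟨h1, h2⟩
    exact ⟨by linarith [mul_comm h (a:ℝ)], by linarith [mul_comm h ((a:ℝ)+1)]⟩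
  · rintro ⟨h1, h2⟩
    exact ⟨by linarith [mul_comm h (a:ℝ)], by linarith [mul_comm h ((a:ℝ)+1)]⟩

lemma mem_dyadicCube_iff {n : ℕ} (k : ℤ) (ℓ : Fin n → ℤ) (z : EuclideanSpace ℝ (Fin n)) :
    z ∈ dyadicCube k ℓ ↔ ℓ = fun i => ⌊z i / (2:ℝ) ^ (-k)⌋ := by
  constructor
  · intro hz
    funext i
    exact (aux_oneD aux_two_zpow_pos (ℓ i)).mp (hz i)
  · intro hℓ i
    exact (aux_oneD aux_two_zpow_pos (ℓ i)).mpr (by rw [hℓ])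

lemma mem_dyadicCube_self {n : ℕ} (k : ℤ) (z : EuclideanSpace ℝ (Fin n)) :
    z ∈ dyadicCube k (fun i => ⌊z i / (2:ℝ) ^ (-k)⌋) :=
  (mem_dyadicCube_iff k _ z).mpr rfl

lemma measurableSet_dyadicCube {n : ℕ} (k : ℤ) (ℓ : Fin n → ℤ) :
    MeasurableSet (dyadicCube k ℓ) := by
  have : dyadicCube k ℓ = ⇑(MeasurableEquiv.toLp 2 (Fin n → ℝ)).symm ⁻¹'
      (Set.univ.pi fun i => Set.Ico ((2:ℝ) ^ (-k) * ℓ i) ((2:ℝ) ^ (-k) * (ℓ i + 1))) := by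
    ext z
    simp [dyadicCube, MeasurableEquiv.toLp, Set.mem_Ico]
    exact Iff.rfl
  rw [this]
  exact (MeasurableEquiv.toLp 2 (Fin n → ℝ)).symm.measurable
    (MeasurableSet.univ_pi fun i => measurableSet_Ico)

lemma volume_dyadicCube {n : ℕ} (k : ℤ) (ℓ : Fin n → ℤ) :
    volume (dyadicCube k ℓ) = ENNReal.ofReal (((2:ℝ) ^ (-k)) ^ n) := by
  have hset : dyadicCube k ℓ = ⇑(MeasurableEquiv.toLp 2 (Fin n → ℝ)).symm ⁻¹'
      (Set.univ.pi fun i => Set.Ico ((2:ℝ) ^ (-k) * ℓ i) ((2:ℝ) ^ (-k) * (ℓ i + 1))) := by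
    ext z
    simp [dyadicCube, MeasurableEquiv.toLp, Set.mem_Ico]
    exact Iff.rfl
  rw [hset, (EuclideanSpace.volume_preserving_symm_measurableEquiv_toLp (Fin n)).measure_preimage
    ((MeasurableSet.univ_pi fun i => measurableSet_Ico).nullMeasurableSet)]
  rw [volume_pi_pi]
  have : ∀ i : Fin n, volume (Set.Ico ((2:ℝ) ^ (-k) * ℓ i) ((2:ℝ) ^ (-k) * (ℓ i + 1)))
      = ENNReal.ofReal ((2:ℝ) ^ (-k)) := by
    intro i
    rw [Real.volume_Ico]
    congr 1
    ring
  simp only [this]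
  rw [Finset.prod_const, ← ENNReal.ofReal_pow aux_two_zpow_pos.le]
  simp

lemma aux_norm_le_of_coords {n : ℕ} (w : EuclideanSpace ℝ (Fin n)) (h : ℝ) (hh : 0 ≤ h)
    (hc : ∀ i, |w i| ≤ h) : ‖w‖ ≤ Real.sqrt n * h := by
  rw [EuclideanSpace.norm_eq]
  have hsum : ∑ i, ‖w i‖ ^ 2 ≤ (n : ℝ) * h ^ 2 := by
    calc ∑ i, ‖w i‖ ^ 2 ≤ ∑ _i : Fin n, h ^ 2 := by
          apply Finset.sum_le_sum
          intro i _
          have := hc i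
          rw [Real.norm_eq_abs]
          nlinarith [abs_nonneg (w i)]
      _ = (n : ℝ) * h ^ 2 := by simp [Finset.sum_const, nsmul_eq_mul]
  calc Real.sqrt (∑ i, ‖w i‖ ^ 2) ≤ Real.sqrt ((n:ℝ) * h ^ 2) := Real.sqrt_le_sqrt hsum
    _ = Real.sqrt n * h := by
        rw [Real.sqrt_mul (Nat.cast_nonneg n), Real.sqrt_sq hh]

lemma aux_lintegral_ball_le_maxFn {n : ℕ} (g : EuclideanSpace ℝ (Fin n) → ℝ)
    (x : EuclideanSpace ℝ (Fin n)) {R : ℝ} (hR : 0 < R) :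
    ∫⁻ z in Metric.ball x R, ENNReal.ofReal |g z| ≤
      volume (Metric.ball x R) * maxFn g x := by
  have h1 : (volume (Metric.ball x R))⁻¹ * ∫⁻ z in Metric.ball x R, ENNReal.ofReal |g z|
      ≤ maxFn g x := by
    apply le_iSup_of_le x
    apply le_iSup_of_le R
    apply le_iSup_of_le hR
    exact le_iSup_of_le (Metric.mem_ball_self hR) le_rfl
  have hne : volume (Metric.ball x R) ≠ 0 := (Metric.measure_ball_pos volume x hR).ne'
  have hnt : volume (Metric.ball x R) ≠ ⊤ := measure_ball_lt_top.ne
  calc ∫⁻ z in Metric.ball x R, ENNReal.ofReal |g z|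
      = volume (Metric.ball x R) * ((volume (Metric.ball x R))⁻¹ *
        ∫⁻ z in Metric.ball x R, ENNReal.ofReal |g z|) := by
        rw [← mul_assoc, ENNReal.mul_inv_cancel hne hnt, one_mul]
    _ ≤ volume (Metric.ball x R) * maxFn g x := mul_le_mul_right h1 _

lemma aux_exp_arith (n : ℕ) (θ ε : ℝ) (hθ0 : 0 < θ) (k : ℤ) (i : ℕ)
    (r cκ c2 : ℝ) (hr : 0 < r) (hκ : 0 < cκ) (hc2 : 0 < c2) :
    ((2:ℝ) ^ (-(k:ℝ) * n) * r ^ ε / ((2:ℝ) ^ i * r / 2) ^ ((n:ℝ) + ε)) *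
      (((c2 * 2 ^ i * r) ^ n * cκ) / ((2:ℝ) ^ (-k)) ^ n) ^ (1/θ)
    = ((2:ℝ) ^ ((n:ℝ) + ε) * ((c2 ^ n * cκ) ^ (1/θ))) *
      ((2:ℝ) ^ ((n:ℝ)/θ - n - ε)) ^ i *
      (2:ℝ) ^ (((-k:ℝ) - Real.logb 2 r) * (n:ℝ) * (1 - 1/θ)) := by
  have h2 : (0:ℝ) < 2 := by norm_num
  have hl2 : Real.log 2 ≠ 0 := (Real.log_pos (by norm_num)).ne'
  have hLpos : (0:ℝ) < ((2:ℝ) ^ (-(k:ℝ) * n) * r ^ ε / ((2:ℝ) ^ i * r / 2) ^ ((n:ℝ) + ε)) *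
      (((c2 * 2 ^ i * r) ^ n * cκ) / ((2:ℝ) ^ (-k)) ^ n) ^ (1/θ) := by positivity
  have hRpos : (0:ℝ) < ((2:ℝ) ^ ((n:ℝ) + ε) * ((c2 ^ n * cκ) ^ (1/θ))) *
      ((2:ℝ) ^ ((n:ℝ)/θ - n - ε)) ^ i *
      (2:ℝ) ^ (((-k:ℝ) - Real.logb 2 r) * (n:ℝ) * (1 - 1/θ)) := by positivity
  rw [← Real.exp_log hLpos, ← Real.exp_log hRpos]
  congr 1
  simp (disch := positivity) only [Real.log_mul, Real.log_div, Real.log_rpow, Real.log_pow,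
    Real.log_zpow]
  rw [Real.logb]
  field_simp
  push_cast
  ring

end Aux

set_option maxHeartbeats 2000000 in
theorem stmt17 (n : ℕ) (hn : 1 ≤ n) (ε θ : ℝ) (hε0 : 0 < ε) (hε1 : ε < 1)
    (hθ1 : θ ≤ 1) (hθ : (n : ℝ) / (n + ε) < θ) :
    ∃ C : ℝ, 0 < C ∧
      ∀ (k k' : ℤ) (x : EuclideanSpace ℝ (Fin n)) (lam : (Fin n → ℤ) → ℝ),
        (∀ ℓ, 0 ≤ lam ℓ) →
        (∑' ℓ : Fin n → ℤ,
          ENNReal.ofReal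
            ((2 : ℝ) ^ (-(k : ℝ) * n) * lam ℓ *
                (max ((2 : ℝ) ^ (-k)) ((2 : ℝ) ^ (-k'))) ^ ε /
              ((max ((2 : ℝ) ^ (-k)) ((2 : ℝ) ^ (-k')) +
                  ‖x - (WithLp.equiv 2 (Fin n → ℝ)).symm
                    (fun i => (2 : ℝ) ^ (-k) * (ℓ i : ℝ))‖) ^ ((n : ℝ) + ε))))
          ≤ ENNReal.ofReal
              (C * (2 : ℝ) ^ (((-k : ℝ) -
                  Real.logb 2 (max ((2 : ℝ) ^ (-k)) ((2 : ℝ) ^ (-k')))) *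
                n * (1 - 1 / θ))) *
            (maxFn (fun z => ∑' ℓ : Fin n → ℤ,
                lam ℓ ^ θ * Set.indicator (dyadicCube k ℓ) 1 z) x) ^ ((1 : ℝ) / θ) := by
  classical
  haveI : Nonempty (Fin n) := ⟨⟨0, hn⟩⟩
  have hn0 : (0:ℝ) < n := by exact_mod_cast hn
  have hnε : (0:ℝ) < (n:ℝ) + ε := by linarith
  have hθ0 : 0 < θ := lt_trans (div_pos hn0 hnε) hθ
  have hp1 : (1:ℝ) ≤ 1/θ := by rw [le_div_iff₀ hθ0, one_mul]; exact hθ1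
  have hp0 : (0:ℝ) ≤ 1/θ := by linarith
  have hnθ : (n:ℝ)/θ < (n:ℝ) + ε := by
    rw [div_lt_iff₀ hθ0]
    have h' := (div_lt_iff₀ hnε).mp hθ
    linarith [mul_comm θ ((n:ℝ)+ε)]
  set q : ℝ := (2:ℝ) ^ ((n:ℝ)/θ - n - ε) with hq_def
  have hq0 : 0 < q := Real.rpow_pos_of_pos (by norm_num) _
  have hq1 : q < 1 := Real.rpow_lt_one_of_one_lt_of_neg (by norm_num) (by linarith)
  set cs : ℝ := 2 + Real.sqrt n with hcs_def
  have hcs : 0 < cs := by positivity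
  set cκ : ℝ := Real.sqrt Real.pi ^ n / Real.Gamma ((n:ℝ) / 2 + 1) with hcκ_def
  have hcκ : 0 < cκ := div_pos (pow_pos (Real.sqrt_pos.mpr Real.pi_pos) n)
    (Real.Gamma_pos_of_pos (by positivity))
  set K₀ : ℝ := (2:ℝ) ^ ((n:ℝ) + ε) * ((cs ^ n * cκ) ^ ((1:ℝ)/θ)) with hK0_def
  have hK₀ : 0 < K₀ := by positivity
  have hoq1 : ENNReal.ofReal q < 1 := by
    rw [← ENNReal.ofReal_one]
    exact (ENNReal.ofReal_lt_ofReal_iff_of_nonneg hq0.le).mpr hq1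
  set Kbig : ℝ≥0∞ := ENNReal.ofReal K₀ * (1 - ENNReal.ofReal q)⁻¹ with hKbig_def
  have hKtop : Kbig ≠ ⊤ := by
    apply ENNReal.mul_ne_top ENNReal.ofReal_ne_top
    rw [Ne, ENNReal.inv_eq_top, tsub_eq_zero_iff_le]
    exact not_le.mpr hoq1
  refine ⟨Kbig.toReal + 1, by positivity, ?_⟩
  intro k k' x lam hlam
  set r : ℝ := max ((2:ℝ) ^ (-k)) ((2:ℝ) ^ (-k')) with hr_def
  have h2k : (0:ℝ) < (2:ℝ) ^ (-k) := aux_two_zpow_pos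
  have hr : 0 < r := lt_of_lt_of_le h2k (le_max_left _ _)
  have hkr : (2:ℝ) ^ (-k) ≤ r := le_max_left _ _
  set P : ℝ := (2:ℝ) ^ (((-k : ℝ) - Real.logb 2 r) * n * (1 - 1 / θ)) with hP_def
  have hP : 0 < P := Real.rpow_pos_of_pos (by norm_num) _
  set c : (Fin n → ℤ) → EuclideanSpace ℝ (Fin n) :=
    fun ℓ => (WithLp.equiv 2 (Fin n → ℝ)).symm (fun i => (2:ℝ) ^ (-k) * (ℓ i : ℝ)) with hc_def
  set d : (Fin n → ℤ) → ℝ := fun ℓ => ‖x - c ℓ‖ with hd_def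
  have hd0 : ∀ ℓ, 0 ≤ d ℓ := fun ℓ => norm_nonneg _
  set g : EuclideanSpace ℝ (Fin n) → ℝ :=
    fun z => ∑' ℓ : Fin n → ℤ, lam ℓ ^ θ * Set.indicator (dyadicCube k ℓ) 1 z with hg_def
  set M : ℝ≥0∞ := maxFn g x with hM_def
  -- pointwise description of g
  have hg_eq : ∀ z, g z = lam (fun i => ⌊z i / (2:ℝ) ^ (-k)⌋) ^ θ := by
    intro z
    simp only [hg_def]
    rw [tsum_eq_single (fun i => ⌊z i / (2:ℝ) ^ (-k)⌋) ?_]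
    · rw [Set.indicator_of_mem (mem_dyadicCube_self k z), Pi.one_apply, mul_one]
    · intro b hb
      rw [Set.indicator_of_notMem, mul_zero]
      intro hbmem
      exact hb ((mem_dyadicCube_iff k b z).mp hbmem)
  have hg_nonneg : ∀ z, 0 ≤ g z := fun z => by
    rw [hg_eq z]; exact Real.rpow_nonneg (hlam _) _
  have hG_eq : ∀ z, ENNReal.ofReal (g z) =
      ∑' ℓ : Fin n → ℤ,
        Set.indicator (dyadicCube k ℓ) (fun _ => ENNReal.ofReal (lam ℓ ^ θ)) z := by
    intro z
    symm
    rw [tsum_eq_single (fun i => ⌊z i / (2:ℝ) ^ (-k)⌋) ?_]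
    · rw [Set.indicator_of_mem (mem_dyadicCube_self k z), hg_eq z]
    · intro b hb
      rw [Set.indicator_of_notMem]
      intro hbmem
      exact hb ((mem_dyadicCube_iff k b z).mp hbmem)
  -- the annulus index
  have hJex : ∀ ℓ : Fin n → ℤ, ∃ i : ℕ, d ℓ ≤ 2 ^ i * r := by
    intro ℓ
    obtain ⟨i, hi⟩ := pow_unbounded_of_one_lt (d ℓ / r) (one_lt_two (α := ℝ))
    exact ⟨i, le_of_lt ((div_lt_iff₀ hr).mp hi)⟩
  set J : (Fin n → ℤ) → ℕ := fun ℓ => Nat.find (hJex ℓ) with hJ_def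
  have hJ1 : ∀ ℓ, d ℓ ≤ 2 ^ (J ℓ) * r := fun ℓ => Nat.find_spec (hJex ℓ)
  have hJ2 : ∀ ℓ, 2 ^ (J ℓ) * r / 2 ≤ r + d ℓ := by
    intro ℓ
    rcases Nat.eq_zero_or_pos (J ℓ) with h0 | hpos
    · rw [h0]
      simp only [pow_zero, one_mul]
      linarith [hd0 ℓ]
    · have hlt : J ℓ - 1 < J ℓ := by omega
      have hmin := Nat.find_min (hJex ℓ) hlt
      push_neg at hmin
      have h2 : (2:ℝ) ^ (J ℓ) = 2 ^ (J ℓ - 1) * 2 := by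
        rw [← pow_succ]
        congr 1
        omega
      have hmin' : (2:ℝ) ^ (J ℓ - 1) * r < d ℓ := hmin
      rw [h2]
      linarith
  -- cubes in annulus i are inside the ball of radius cs * 2^i * r
  have hsubset : ∀ ℓ, dyadicCube k ℓ ⊆ Metric.ball x (cs * 2 ^ (J ℓ) * r) := by
    intro ℓ z hz
    have h1 : ‖z - c ℓ‖ ≤ Real.sqrt n * (2:ℝ) ^ (-k) := by
      apply aux_norm_le_of_coords _ _ h2k.le
      intro i
      have hzi := hz i
      have hsub : (z - c ℓ) i = z i - (2:ℝ) ^ (-k) * (ℓ i : ℝ) := rfl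
      rw [hsub, abs_le]
      have hexp : (2:ℝ) ^ (-k) * ((ℓ i : ℝ) + 1) = (2:ℝ) ^ (-k) * (ℓ i : ℝ) + (2:ℝ) ^ (-k) := by
        ring
      constructor
      · linarith [hzi.1]
      · have := hzi.2
        rw [hexp] at this
        linarith
    have hpow1 : (1:ℝ) ≤ 2 ^ (J ℓ) := one_le_pow₀ (by norm_num)
    have hd1 : d ℓ ≤ 2 ^ (J ℓ) * r := hJ1 ℓ
    have hzx : ‖z - x‖ ≤ Real.sqrt n * (2:ℝ) ^ (-k) + d ℓ := by
      have : z - x = (z - c ℓ) + (c ℓ - x) := by abel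
      rw [this]
      have h2 : ‖c ℓ - x‖ = d ℓ := by rw [norm_sub_rev]
      calc ‖(z - c ℓ) + (c ℓ - x)‖ ≤ ‖z - c ℓ‖ + ‖c ℓ - x‖ := norm_add_le _ _
        _ ≤ Real.sqrt n * (2:ℝ) ^ (-k) + d ℓ := by rw [h2]; linarith
    have hsN : (0:ℝ) ≤ Real.sqrt n := Real.sqrt_nonneg n
    have hfin : Real.sqrt n * (2:ℝ) ^ (-k) + d ℓ < cs * 2 ^ (J ℓ) * r := by
      have e1 : Real.sqrt n * (2:ℝ) ^ (-k) ≤ Real.sqrt n * r := by nlinarith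
      have hr2 : r ≤ 2 ^ (J ℓ) * r := by nlinarith
      have e2 : Real.sqrt n * r ≤ Real.sqrt n * (2 ^ (J ℓ) * r) :=
        mul_le_mul_of_nonneg_left hr2 hsN
      have e3 : (0:ℝ) < 2 ^ (J ℓ) * r := by positivity
      rw [hcs_def]
      nlinarith
    rw [Metric.mem_ball, dist_eq_norm]
    exact lt_of_le_of_lt hzx hfin
  -- the summand
  set T : (Fin n → ℤ) → ℝ≥0∞ := fun ℓ => ENNReal.ofReal
    ((2 : ℝ) ^ (-(k : ℝ) * n) * lam ℓ * r ^ ε / ((r + d ℓ) ^ ((n : ℝ) + ε))) with hT_def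
  -- split into annuli
  have hrow : ∀ ℓ, ∑' i : ℕ, (if i = J ℓ then T ℓ else 0) = T ℓ := by
    intro ℓ
    rw [tsum_eq_single (J ℓ) (fun b hb => if_neg hb)]
    exact if_pos rfl
  -- per-annulus estimate
  have key : ∀ i : ℕ, (∑' ℓ, if i = J ℓ then T ℓ else 0)
      ≤ ENNReal.ofReal (K₀ * q ^ i * P) * M ^ ((1:ℝ)/θ) := by
    intro i
    set Ri : ℝ := cs * 2 ^ i * r with hRi_def
    have hRi : 0 < Ri := by positivity
    set Bi := Metric.ball x Ri with hBi_def
    set Di : ℝ := (2 : ℝ) ^ (-(k : ℝ) * n) * r ^ ε / ((2:ℝ) ^ i * r / 2) ^ ((n:ℝ) + ε)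
      with hDi_def
    have hDi : 0 ≤ Di := by positivity
    have hterm : ∀ ℓ, (if i = J ℓ then T ℓ else 0) ≤
        (if i = J ℓ then ENNReal.ofReal (lam ℓ) else 0) * ENNReal.ofReal Di := by
      intro ℓ
      by_cases h : i = J ℓ
      · rw [if_pos h, if_pos h, hT_def, ← ENNReal.ofReal_mul (hlam ℓ)]
        apply ENNReal.ofReal_le_ofReal
        have hden : (0:ℝ) < ((2:ℝ) ^ i * r / 2) ^ ((n:ℝ) + ε) := by positivity
        have hmono : ((2:ℝ) ^ i * r / 2) ^ ((n:ℝ) + ε) ≤ (r + d ℓ) ^ ((n:ℝ) + ε) := by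
          apply Real.rpow_le_rpow (by positivity) _ (by linarith)
          rw [h]
          exact hJ2 ℓ
        have hre : (2 : ℝ) ^ (-(k : ℝ) * n) * lam ℓ * r ^ ε / ((r + d ℓ) ^ ((n : ℝ) + ε))
            = lam ℓ * ((2 : ℝ) ^ (-(k : ℝ) * n) * r ^ ε / ((r + d ℓ) ^ ((n : ℝ) + ε))) := by
          ring
        rw [hre, hDi_def]
        apply mul_le_mul_of_nonneg_left _ (hlam ℓ)
        exact div_le_div_of_nonneg_left (by positivity) hden hmono
      · rw [if_neg h, if_neg h, zero_mul]
    have hBC : (∑' ℓ, (if i = J ℓ then ENNReal.ofReal (lam ℓ) else 0))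
        ≤ (∑' ℓ, (if i = J ℓ then ENNReal.ofReal (lam ℓ ^ θ) else 0)) ^ ((1:ℝ)/θ) := by
      have hpt : ∀ ℓ, (if i = J ℓ then ENNReal.ofReal (lam ℓ) else 0)
          = (if i = J ℓ then ENNReal.ofReal (lam ℓ ^ θ) else 0) ^ ((1:ℝ)/θ) := by
        intro ℓ
        by_cases h : i = J ℓ
        · rw [if_pos h, if_pos h,
            ENNReal.ofReal_rpow_of_nonneg (Real.rpow_nonneg (hlam ℓ) θ) hp0,
            ← Real.rpow_mul (hlam ℓ), mul_one_div_cancel hθ0.ne', Real.rpow_one]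
        · rw [if_neg h, if_neg h, ENNReal.zero_rpow_of_pos (by positivity)]
      calc (∑' ℓ, (if i = J ℓ then ENNReal.ofReal (lam ℓ) else 0))
          = ∑' ℓ, (if i = J ℓ then ENNReal.ofReal (lam ℓ ^ θ) else 0) ^ ((1:ℝ)/θ) :=
            tsum_congr hpt
        _ ≤ _ := aux_tsum_rpow_le _ hp1
    set Ai := ∑' ℓ, (if i = J ℓ then ENNReal.ofReal (lam ℓ ^ θ) else 0) with hAi_def
    set Qv : ℝ≥0∞ := ENNReal.ofReal (((2:ℝ) ^ (-k)) ^ n) with hQv_def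
    have hQne : Qv ≠ 0 := by
      rw [hQv_def]
      exact (ENNReal.ofReal_pos.mpr (by positivity)).ne'
    have hQnt : Qv ≠ ⊤ := ENNReal.ofReal_ne_top
    have hIb : Ai * Qv ≤ volume Bi * M := by
      calc Ai * Qv
          = ∑' ℓ, (if i = J ℓ then ENNReal.ofReal (lam ℓ ^ θ) else 0) * Qv := by
            rw [hAi_def, ENNReal.tsum_mul_right]
        _ ≤ ∑' ℓ, ∫⁻ z in Bi,
              Set.indicator (dyadicCube k ℓ) (fun _ => ENNReal.ofReal (lam ℓ ^ θ)) z := by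
            apply ENNReal.tsum_le_tsum
            intro ℓ
            rw [lintegral_indicator_const (measurableSet_dyadicCube k ℓ),
              Measure.restrict_apply (measurableSet_dyadicCube k ℓ)]
            by_cases h : i = J ℓ
            · rw [if_pos h]
              have hQB : dyadicCube k ℓ ∩ Bi = dyadicCube k ℓ := by
                apply Set.inter_eq_self_of_subset_left
                rw [hBi_def, hRi_def, h]
                exact hsubset ℓ
              rw [hQB, volume_dyadicCube, hQv_def]
            · rw [if_neg h, zero_mul]
              exact zero_le
        _ = ∫⁻ z in Bi, ∑' ℓ : Fin n → ℤ,
              Set.indicator (dyadicCube k ℓ) (fun _ => ENNReal.ofReal (lam ℓ ^ θ)) z :=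
            (lintegral_tsum (fun ℓ =>
              (measurable_const.indicator (measurableSet_dyadicCube k ℓ)).aemeasurable)).symm
        _ = ∫⁻ z in Bi, ENNReal.ofReal |g z| := by
            apply lintegral_congr
            intro z
            rw [abs_of_nonneg (hg_nonneg z)]
            exact (hG_eq z).symm
        _ ≤ volume Bi * M := aux_lintegral_ball_le_maxFn g x hRi
    have hAi2 : Ai ≤ volume Bi * M / Qv :=
      (ENNReal.le_div_iff_mul_le (Or.inl hQne) (Or.inl hQnt)).mpr hIb
    have hvolBi : volume Bi = ENNReal.ofReal (Ri ^ n * cκ) := by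
      rw [hBi_def, EuclideanSpace.volume_ball]
      simp only [Fintype.card_fin]
      rw [← ENNReal.ofReal_pow hRi.le, ← hcκ_def, ← ENNReal.ofReal_mul (by positivity)]
    have hdiv : volume Bi * M / Qv
        = ENNReal.ofReal ((Ri ^ n * cκ) / ((2:ℝ) ^ (-k)) ^ n) * M := by
      calc volume Bi * M / Qv = volume Bi / Qv * M := by
            rw [div_eq_mul_inv, div_eq_mul_inv, mul_right_comm]
        _ = ENNReal.ofReal ((Ri ^ n * cκ) / ((2:ℝ) ^ (-k)) ^ n) * M := by
            rw [hvolBi, hQv_def, ← ENNReal.ofReal_div_of_pos (by positivity)]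
    calc (∑' ℓ, if i = J ℓ then T ℓ else 0)
        ≤ ∑' ℓ, (if i = J ℓ then ENNReal.ofReal (lam ℓ) else 0) * ENNReal.ofReal Di :=
          ENNReal.tsum_le_tsum hterm
      _ = (∑' ℓ, (if i = J ℓ then ENNReal.ofReal (lam ℓ) else 0)) * ENNReal.ofReal Di :=
          ENNReal.tsum_mul_right
      _ ≤ Ai ^ ((1:ℝ)/θ) * ENNReal.ofReal Di := mul_le_mul_left hBC _
      _ ≤ (ENNReal.ofReal ((Ri ^ n * cκ) / ((2:ℝ) ^ (-k)) ^ n) * M) ^ ((1:ℝ)/θ) *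
            ENNReal.ofReal Di := by
          apply mul_le_mul_left
          apply ENNReal.rpow_le_rpow _ hp0
          rw [← hdiv]
          exact hAi2
      _ = ENNReal.ofReal (Di * ((Ri ^ n * cκ) / ((2:ℝ) ^ (-k)) ^ n) ^ ((1:ℝ)/θ)) *
            M ^ ((1:ℝ)/θ) := by
          rw [ENNReal.mul_rpow_of_nonneg _ _ hp0,
            ENNReal.ofReal_rpow_of_nonneg (by positivity) hp0,
            ENNReal.ofReal_mul hDi]
          ring
      _ ≤ ENNReal.ofReal (K₀ * q ^ i * P) * M ^ ((1:ℝ)/θ) := by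
          apply mul_le_mul_left
          apply ENNReal.ofReal_le_ofReal
          apply le_of_eq
          rw [hDi_def, hRi_def, hq_def, hK0_def, hP_def]
          exact aux_exp_arith n θ ε hθ0 k i r cκ cs hr hcκ hcs
  -- sum the geometric series
  have hsum : ∑' (i : ℕ), ENNReal.ofReal (K₀ * q ^ i * P) * M ^ ((1:ℝ)/θ)
      ≤ ENNReal.ofReal ((Kbig.toReal + 1) * P) * M ^ ((1:ℝ)/θ) := by
    have h1 : ∀ i : ℕ, ENNReal.ofReal (K₀ * q ^ i * P)
        = ENNReal.ofReal (K₀ * P) * ENNReal.ofReal q ^ i := by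
      intro i
      rw [← ENNReal.ofReal_pow hq0.le, ← ENNReal.ofReal_mul (by positivity)]
      congr 1
      ring
    calc ∑' (i : ℕ), ENNReal.ofReal (K₀ * q ^ i * P) * M ^ ((1:ℝ)/θ)
        = (∑' (i : ℕ), ENNReal.ofReal (K₀ * P) * ENNReal.ofReal q ^ i) * M ^ ((1:ℝ)/θ) := by
          rw [ENNReal.tsum_mul_right]
          congr 1
          exact tsum_congr h1
      _ = ENNReal.ofReal (K₀ * P) * (1 - ENNReal.ofReal q)⁻¹ * M ^ ((1:ℝ)/θ) := by
          rw [ENNReal.tsum_mul_left, ENNReal.tsum_geometric]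
      _ ≤ ENNReal.ofReal ((Kbig.toReal + 1) * P) * M ^ ((1:ℝ)/θ) := by
          apply mul_le_mul_left
          have e1 : ENNReal.ofReal (K₀ * P) * (1 - ENNReal.ofReal q)⁻¹
              = Kbig * ENNReal.ofReal P := by
            rw [hKbig_def, ENNReal.ofReal_mul hK₀.le]
            ring
          rw [e1, ENNReal.ofReal_mul (by positivity)]
          apply mul_le_mul_left
          calc Kbig = ENNReal.ofReal Kbig.toReal := (ENNReal.ofReal_toReal hKtop).symm
            _ ≤ ENNReal.ofReal (Kbig.toReal + 1) := ENNReal.ofReal_le_ofReal (by linarith)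
  have final : (∑' ℓ, T ℓ) ≤ ENNReal.ofReal ((Kbig.toReal + 1) * P) * M ^ ((1:ℝ)/θ) :=
    calc (∑' ℓ, T ℓ)
        = ∑' ℓ, ∑' i : ℕ, (if i = J ℓ then T ℓ else 0) :=
          tsum_congr (fun ℓ => (hrow ℓ).symm)
      _ = ∑' i : ℕ, ∑' ℓ, (if i = J ℓ then T ℓ else 0) := ENNReal.tsum_comm
      _ ≤ ∑' (i : ℕ), ENNReal.ofReal (K₀ * q ^ i * P) * M ^ ((1:ℝ)/θ) :=
          ENNReal.tsum_le_tsum key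
      _ ≤ _ := hsum
  exact final
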